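/- arXiv:1407.4913 — 2 statements merged into one kernel-verified Lean document; each statement's English description precedes it below -/
import Mathlib

section
/- Let ψ be a branching mechanism of Lévy–Khintchine form with ψ(1) > 0, and let ψ̃ be the continuous function on [0,∞) with ψ̃(0) = α and ψ̃(λ) = ψ(λ)/λ for λ > 0. Then δ_{ψ̃} = δ_{ψ′} = δ − 1, γ_{ψ̃} = γ_{ψ′} = γ − 1, and η_{ψ̃} = η_{ψ′} = η − 1. -/
open MeasureTheory Filter Set

noncomputable section

/-- The branching mechanism `ψ(λ) = αλ + βλ² + ∫_{(0,∞)} (e^{−λr} − 1 + λr) π(dr)`. -/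
def psiFun (α β : ℝ) (π : Measure ℝ) : ℝ → ℝ := fun l =>
  α * l + β * l ^ 2 + ∫ r, (Real.exp (-(l * r)) - 1 + l * r) ∂π

/-- `ψ′(λ) = α + 2βλ + ∫_{(0,∞)} r(1 − e^{−λr}) π(dr)`. -/
def psiDeriv (α β : ℝ) (π : Measure ℝ) : ℝ → ℝ := fun l =>
  α + 2 * β * l + ∫ r, r * (1 - Real.exp (-(l * r))) ∂π

/-- `(α, β, π)` is the datum of a (sub)critical branching mechanism of
Lévy–Khintchine form: `α, β ≥ 0`, `π` is a Borel measure carried by `(0,∞)`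
with `∫ min(r, r²) π(dr) < ∞`. -/
structure IsBranchingMechanism (α β : ℝ) (π : Measure ℝ) : Prop where
  alpha_nonneg : 0 ≤ α
  beta_nonneg : 0 ≤ β
  carried_on_pos : π (Set.Iic 0) = 0
  integ_min : Integrable (fun r => min r (r ^ 2)) π

/-- The lower index `γ_f = sup {c ≥ 0 : f(λ)λ^{−c} → ∞}` (with `sup ∅ = 0`). -/
def lowerIndex (f : ℝ → ℝ) : ℝ :=
  sSup {c : ℝ | 0 ≤ c ∧ Tendsto (fun l : ℝ => f l * l ^ (-c)) atTop atTop}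

/-- The upper index `η_f = inf {c ≥ 0 : f(λ)λ^{−c} → 0}`. -/
def upperIndex (f : ℝ → ℝ) : ℝ :=
  sInf {c : ℝ | 0 ≤ c ∧ Tendsto (fun l : ℝ => f l * l ^ (-c)) atTop (nhds 0)}

/-- `δ_f = sup {c ≥ 0 : ∃ C > 0, ∀ 1 ≤ μ ≤ λ, C f(μ)μ^{−c} ≤ f(λ)λ^{−c}}`. -/
def deltaIndex (f : ℝ → ℝ) : ℝ :=
  sSup {c : ℝ | 0 ≤ c ∧ ∃ C : ℝ, 0 < C ∧
    ∀ μ l : ℝ, 1 ≤ μ → μ ≤ l → C * (f μ * μ ^ (-c)) ≤ f l * l ^ (-c)}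

/-! On `[1, ∞)` both `ψ̃` and `ψ′` lie within constant factors of `ψ(λ)/λ`, the latter because
`ψ(λ) ≤ λψ′(λ) ≤ 2ψ(λ)`, which holds pointwise in the integrand. The three indices do not see
constant factors, and dividing by `λ` lowers every admissible exponent by one. The truncation
`c ≥ 0` in the index sets survives the shift because `ψ(λ)/λ` is nondecreasing up to a factor `2`
(`λψ(μ) ≤ 2μψ(λ)` for `μ ≤ λ`) while `ψ(λ) = O(λ²)`: the index sets of `ψ` contain `[0, 1)` and
are bounded. -/

lemma one_add_mul_exp_neg_le_one (x : ℝ) : (1 + x) * Real.exp (-x) ≤ 1 := by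
  calc (1 + x) * Real.exp (-x) ≤ Real.exp x * Real.exp (-x) := by
        gcongr
        linarith [Real.add_one_le_exp x]
    _ = 1 := by rw [← Real.exp_add, add_neg_cancel, Real.exp_zero]

lemma one_sub_exp_neg_le (x : ℝ) : 1 - Real.exp (-x) ≤ x := by
  linarith [Real.add_one_le_exp (-x)]

lemma one_sub_exp_neg_nonneg {x : ℝ} (hx : 0 ≤ x) : 0 ≤ 1 - Real.exp (-x) := by
  simpa using Real.exp_le_one_iff.mpr (neg_nonpos.mpr hx)

lemma exp_neg_sub_one_add_nonneg (x : ℝ) : 0 ≤ Real.exp (-x) - 1 + x := by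
  linarith [one_sub_exp_neg_le x]

lemma exp_neg_sub_one_add_le_self {x : ℝ} (hx : 0 ≤ x) : Real.exp (-x) - 1 + x ≤ x := by
  linarith [one_sub_exp_neg_nonneg hx]

lemma exp_neg_sub_one_add_le_mul_one_sub_exp_neg (x : ℝ) :
    Real.exp (-x) - 1 + x ≤ x * (1 - Real.exp (-x)) := by
  linarith [one_add_mul_exp_neg_le_one x]

lemma exp_neg_sub_one_add_le_sq {x : ℝ} (hx : 0 ≤ x) : Real.exp (-x) - 1 + x ≤ x ^ 2 :=
  calc Real.exp (-x) - 1 + x ≤ x * (1 - Real.exp (-x)) :=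
        exp_neg_sub_one_add_le_mul_one_sub_exp_neg x
    _ ≤ x * x := by gcongr; exact one_sub_exp_neg_le x
    _ = x ^ 2 := (sq x).symm

lemma mul_one_sub_exp_neg_le_two_mul {x : ℝ} (hx : 0 ≤ x) :
    x * (1 - Real.exp (-x)) ≤ 2 * (Real.exp (-x) - 1 + x) := by
  -- `F y = 2 (e^{-y} - 1 + y) - y (1 - e^{-y})`
  let F : ℝ → ℝ := fun y => (2 + y) * Real.exp (-y) + y - 2
  have hF : ∀ y, HasDerivAt F (1 - (1 + y) * Real.exp (-y)) y := fun y => by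
    have hexp : HasDerivAt (fun y => Real.exp (-y)) (-Real.exp (-y)) y := by
      simpa using (hasDerivAt_neg' y).exp
    exact ((((hasDerivAt_id' y).const_add 2).mul hexp).add (hasDerivAt_id' y)).sub_const 2
      |>.congr_deriv (by ring)
  have hmono : MonotoneOn F (Ici 0) :=
    monotoneOn_of_deriv_nonneg (convex_Ici 0) (fun y _ => (hF y).continuousAt.continuousWithinAt)
      (fun y _ => (hF y).differentiableAt.differentiableWithinAt)
      (fun y _ => by rw [(hF y).deriv]; linarith [one_add_mul_exp_neg_le_one y])
  have := hmono self_mem_Ici hx hx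
  simp only [F, neg_zero, Real.exp_zero] at this
  linarith

lemma mul_exp_neg_sub_one_add_le {a b : ℝ} (ha : 0 ≤ a) (hab : a ≤ b) :
    b * (Real.exp (-a) - 1 + a) ≤ 2 * (a * (Real.exp (-b) - 1 + b)) :=
  calc b * (Real.exp (-a) - 1 + a) ≤ b * (a * (1 - Real.exp (-a))) := by
        gcongr
        · linarith
        · exact exp_neg_sub_one_add_le_mul_one_sub_exp_neg a
    _ ≤ a * (b * (1 - Real.exp (-b))) := by
        rw [mul_left_comm]
        have : Real.exp (-b) ≤ Real.exp (-a) := Real.exp_le_exp.mpr (neg_le_neg hab)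
        gcongr
        linarith
    _ ≤ 2 * (a * (Real.exp (-b) - 1 + b)) := by
        rw [mul_left_comm 2]
        exact mul_le_mul_of_nonneg_left (mul_one_sub_exp_neg_le_two_mul (ha.trans hab)) ha

lemma exp_neg_mul_sub_one_add_le {l r : ℝ} (hl : 0 ≤ l) (hr : 0 ≤ r) :
    Real.exp (-(l * r)) - 1 + l * r ≤ (l + l ^ 2) * min r (r ^ 2) := by
  have hlr : 0 ≤ l * r := mul_nonneg hl hr
  rcases le_total r 1 with hr1 | hr1
  · rw [min_eq_right (by nlinarith)]
    nlinarith [exp_neg_sub_one_add_le_sq hlr]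
  · rw [min_eq_left (by nlinarith)]
    nlinarith [exp_neg_sub_one_add_le_self hlr]

lemma mul_one_sub_exp_neg_mul_le {l r : ℝ} (hl : 0 ≤ l) (hr : 0 ≤ r) :
    r * (1 - Real.exp (-(l * r))) ≤ (1 + l) * min r (r ^ 2) := by
  have h₀ := one_sub_exp_neg_le (l * r)
  have h₁ : 1 - Real.exp (-(l * r)) ≤ 1 := by linarith [Real.exp_pos (-(l * r))]
  rcases le_total r 1 with hr1 | hr1
  · rw [min_eq_right (by nlinarith)]
    nlinarith
  · rw [min_eq_left (by nlinarith)]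
    nlinarith

lemma Real.sSup_shift_sub_one {S : Set ℝ} (hS : BddAbove S) (hS₁ : Ico 0 1 ⊆ S) :
    sSup {c : ℝ | 0 ≤ c ∧ c + 1 ∈ S} = sSup S - 1 := by
  set T := {c : ℝ | 0 ≤ c ∧ c + 1 ∈ S}
  have hT : BddAbove T := ⟨sSup S - 1, fun c hc => by linarith [le_csSup hS hc.2]⟩
  have hT₀ : 0 ≤ sSup T := Real.sSup_nonneg fun c hc => hc.1
  have hS₁' : 1 ≤ sSup S := by
    simpa [csSup_Ico zero_lt_one] using csSup_le_csSup hS (nonempty_Ico.2 zero_lt_one) hS₁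
  refine le_antisymm (Real.sSup_le (fun c hc => by linarith [le_csSup hS hc.2]) (by linarith)) ?_
  rw [sub_le_iff_le_add]
  refine csSup_le ⟨0, hS₁ ⟨le_rfl, zero_lt_one⟩⟩ fun x hx => ?_
  rcases lt_or_ge x 1 with hx₁ | hx₁
  · linarith
  · linarith [le_csSup hT (show x - 1 ∈ T from ⟨by linarith, by simpa using hx⟩)]

lemma Real.sInf_shift_sub_one {S : Set ℝ} (hS : S.Nonempty) (hS₁ : S ⊆ Ici 1) :
    sInf {c : ℝ | 0 ≤ c ∧ c + 1 ∈ S} = sInf S - 1 := by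
  set T := {c : ℝ | 0 ≤ c ∧ c + 1 ∈ S}
  have hmem : ∀ x ∈ S, x - 1 ∈ T := fun x hx =>
    ⟨by linarith [mem_Ici.mp (hS₁ hx)], by simpa using hx⟩
  obtain ⟨x, hx⟩ := hS
  refine le_antisymm ?_ (le_csInf ⟨x - 1, hmem x hx⟩ fun c hc => ?_)
  · rw [le_sub_iff_add_le]
    exact le_csInf ⟨x, hx⟩ fun y hy => by linarith [csInf_le ⟨0, fun c hc => hc.1⟩ (hmem y hy)]
  · linarith [csInf_le ⟨1, hS₁⟩ hc.2]

-- `lowerIndex f = sSup (lowerIndexSet f)` etc. hold by `rfl`.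
def lowerIndexSet (f : ℝ → ℝ) : Set ℝ :=
  {c : ℝ | 0 ≤ c ∧ Tendsto (fun l : ℝ => f l * l ^ (-c)) atTop atTop}

def upperIndexSet (f : ℝ → ℝ) : Set ℝ :=
  {c : ℝ | 0 ≤ c ∧ Tendsto (fun l : ℝ => f l * l ^ (-c)) atTop (nhds 0)}

def deltaIndexSet (f : ℝ → ℝ) : Set ℝ :=
  {c : ℝ | 0 ≤ c ∧ ∃ C : ℝ, 0 < C ∧
    ∀ μ l : ℝ, 1 ≤ μ → μ ≤ l → C * (f μ * μ ^ (-c)) ≤ f l * l ^ (-c)}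

lemma div_self_mul_rpow_neg (x : ℝ) {l : ℝ} (hl : 0 < l) (c : ℝ) :
    x / l * l ^ (-c) = x * l ^ (-(c + 1)) := by
  rw [neg_add, Real.rpow_add hl, Real.rpow_neg_one, div_eq_mul_inv]
  ring

lemma rpow_neg_eq_rpow_neg_mul_rpow_sub {x : ℝ} (hx : 0 < x) (c c' : ℝ) :
    x ^ (-c') = x ^ (-c) * x ^ (c - c') := by
  rw [← Real.rpow_add hx]
  ring_nf

lemma mul_rpow_neg_le_of_le_mul_rpow {x K l s : ℝ} (hl : 0 < l) (hx : x ≤ K * l ^ s) (c : ℝ) :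
    x * l ^ (-c) ≤ K * l ^ (s - c) :=
  calc x * l ^ (-c) ≤ K * l ^ s * l ^ (-c) := by gcongr
    _ = K * l ^ (s - c) := by rw [mul_assoc, ← Real.rpow_add hl, sub_eq_add_neg]

lemma tendsto_const_mul_rpow_sub_nhds_zero (K : ℝ) {s c : ℝ} (hsc : s < c) :
    Tendsto (fun l : ℝ => K * l ^ (s - c)) atTop (nhds 0) := by
  simpa [neg_sub] using (tendsto_rpow_neg_atTop (sub_pos.2 hsc)).const_mul K

section Growth

variable {f : ℝ → ℝ} {a K s : ℝ}

lemma lowerIndexSet_subset_Iic (hup : ∀ l, 1 ≤ l → f l ≤ K * l ^ s) :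
    lowerIndexSet f ⊆ Iic s := by
  rintro c ⟨-, hc⟩
  refine mem_Iic.2 (le_of_not_gt fun hsc => ?_)
  refine not_tendsto_atTop_of_tendsto_nhds (tendsto_const_mul_rpow_sub_nhds_zero K hsc)
    (tendsto_atTop_mono' _ ?_ hc)
  filter_upwards [eventually_ge_atTop 1] with l hl
  exact mul_rpow_neg_le_of_le_mul_rpow (by linarith) (hup l hl) c

lemma deltaIndexSet_subset_Iic (hf : 0 < f 1) (hup : ∀ l, 1 ≤ l → f l ≤ K * l ^ s) :
    deltaIndexSet f ⊆ Iic s := by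
  rintro c ⟨-, C, hC, hCf⟩
  refine mem_Iic.2 (le_of_not_gt fun hsc => ?_)
  refine (mul_pos hC hf).not_ge (ge_of_tendsto (tendsto_const_mul_rpow_sub_nhds_zero K hsc) ?_)
  filter_upwards [eventually_ge_atTop 1] with l hl
  have := hCf 1 l le_rfl hl
  rw [Real.one_rpow, mul_one] at this
  exact this.trans (mul_rpow_neg_le_of_le_mul_rpow (by linarith) (hup l hl) c)

lemma mem_upperIndexSet_of_le_mul_rpow (hnn : ∀ l, 1 ≤ l → 0 ≤ f l)
    (hup : ∀ l, 1 ≤ l → f l ≤ K * l ^ s) {c : ℝ} (hc : 0 ≤ c) (hsc : s < c) :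
    c ∈ upperIndexSet f := by
  refine ⟨hc, squeeze_zero' ?_ ?_ (tendsto_const_mul_rpow_sub_nhds_zero K hsc)⟩
  · filter_upwards [eventually_ge_atTop 1] with l hl
    exact mul_nonneg (hnn l hl) (Real.rpow_nonneg (by linarith) _)
  · filter_upwards [eventually_ge_atTop 1] with l hl
    exact mul_rpow_neg_le_of_le_mul_rpow (by linarith) (hup l hl) c

lemma mul_rpow_one_sub_le (hlow : ∀ l, 1 ≤ l → a * l ≤ f l) {l : ℝ} (hl : 1 ≤ l) (c : ℝ) :
    a * l ^ (1 - c) ≤ f l * l ^ (-c) :=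
  calc a * l ^ (1 - c) = a * l * l ^ (-c) := by
        rw [sub_eq_add_neg, Real.rpow_add (by linarith), Real.rpow_one, mul_assoc]
    _ ≤ f l * l ^ (-c) := by gcongr; exact hlow l hl

lemma Ico_subset_lowerIndexSet (ha : 0 < a) (hlow : ∀ l, 1 ≤ l → a * l ≤ f l) :
    Ico 0 1 ⊆ lowerIndexSet f := by
  rintro c ⟨hc₀, hc₁⟩
  refine ⟨hc₀, tendsto_atTop_mono' _ ?_ ((tendsto_rpow_atTop (sub_pos.2 hc₁)).const_mul_atTop ha)⟩
  filter_upwards [eventually_ge_atTop 1] with l hl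
  exact mul_rpow_one_sub_le hlow hl c

lemma upperIndexSet_subset_Ici_one (ha : 0 < a) (hlow : ∀ l, 1 ≤ l → a * l ≤ f l) :
    upperIndexSet f ⊆ Ici 1 := by
  rintro c ⟨-, hc⟩
  refine mem_Ici.2 (le_of_not_gt fun hc₁ => ?_)
  refine ha.not_ge (ge_of_tendsto hc ?_)
  filter_upwards [eventually_ge_atTop 1] with l hl
  calc a = a * 1 := (mul_one a).symm
    _ ≤ a * l ^ (1 - c) := by gcongr; exact Real.one_le_rpow hl (sub_nonneg.2 hc₁.le)
    _ ≤ f l * l ^ (-c) := mul_rpow_one_sub_le hlow hl c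

lemma mem_deltaIndexSet_of_le (hnn : ∀ l, 1 ≤ l → 0 ≤ f l) {c c' : ℝ} (hc : c ∈ deltaIndexSet f)
    (hc'₀ : 0 ≤ c') (hc' : c' ≤ c) : c' ∈ deltaIndexSet f := by
  obtain ⟨-, C, hC, hCf⟩ := hc
  refine ⟨hc'₀, C, hC, fun μ l hμ hμl => ?_⟩
  have hμ₀ : 0 < μ := by linarith
  have hl₀ : 0 < l := by linarith
  calc C * (f μ * μ ^ (-c')) = C * (f μ * μ ^ (-c)) * μ ^ (c - c') := by
        rw [rpow_neg_eq_rpow_neg_mul_rpow_sub hμ₀ c c']; ring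
    _ ≤ f l * l ^ (-c) * l ^ (c - c') :=
        mul_le_mul (hCf μ l hμ hμl) (Real.rpow_le_rpow hμ₀.le hμl (by linarith))
          (Real.rpow_nonneg hμ₀.le _) (mul_nonneg (hnn l (by linarith)) (Real.rpow_nonneg hl₀.le _))
    _ = f l * l ^ (-c') := by rw [rpow_neg_eq_rpow_neg_mul_rpow_sub hl₀ c c']; ring

end Growth

section DivSelf

variable {f : ℝ → ℝ} {a K s : ℝ}

lemma lowerIndexSet_div_self (f : ℝ → ℝ) :
    lowerIndexSet (fun l => f l / l) = {c : ℝ | 0 ≤ c ∧ c + 1 ∈ lowerIndexSet f} := by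
  ext c
  have hev : (fun l : ℝ => f l / l * l ^ (-c)) =ᶠ[atTop] fun l => f l * l ^ (-(c + 1)) :=
    (eventually_gt_atTop 0).mono fun l hl => div_self_mul_rpow_neg (f l) hl c
  simp only [lowerIndexSet, mem_ofPred_eq, tendsto_congr' hev]
  exact ⟨fun ⟨hc, h⟩ => ⟨hc, by linarith, h⟩, fun ⟨hc, _, h⟩ => ⟨hc, h⟩⟩

lemma upperIndexSet_div_self (f : ℝ → ℝ) :
    upperIndexSet (fun l => f l / l) = {c : ℝ | 0 ≤ c ∧ c + 1 ∈ upperIndexSet f} := by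
  ext c
  have hev : (fun l : ℝ => f l / l * l ^ (-c)) =ᶠ[atTop] fun l => f l * l ^ (-(c + 1)) :=
    (eventually_gt_atTop 0).mono fun l hl => div_self_mul_rpow_neg (f l) hl c
  simp only [upperIndexSet, mem_ofPred_eq, tendsto_congr' hev]
  exact ⟨fun ⟨hc, h⟩ => ⟨hc, by linarith, h⟩, fun ⟨hc, _, h⟩ => ⟨hc, h⟩⟩

lemma deltaIndexSet_div_self (f : ℝ → ℝ) :
    deltaIndexSet (fun l => f l / l) = {c : ℝ | 0 ≤ c ∧ c + 1 ∈ deltaIndexSet f} := by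
  ext c
  have hrw : ∀ {μ l C : ℝ}, 1 ≤ μ → μ ≤ l →
      (C * (f μ / μ * μ ^ (-c)) ≤ f l / l * l ^ (-c) ↔
        C * (f μ * μ ^ (-(c + 1))) ≤ f l * l ^ (-(c + 1))) := fun hμ hμl => by
    rw [div_self_mul_rpow_neg _ (by linarith), div_self_mul_rpow_neg _ (by linarith)]
  simp only [deltaIndexSet, mem_ofPred_eq]
  constructor
  · rintro ⟨hc, C, hC, hCf⟩
    exact ⟨hc, by linarith, C, hC, fun μ l hμ hμl => (hrw hμ hμl).1 (hCf μ l hμ hμl)⟩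
  · rintro ⟨hc, -, C, hC, hCf⟩
    exact ⟨hc, C, hC, fun μ l hμ hμl => (hrw hμ hμl).2 (hCf μ l hμ hμl)⟩

lemma lowerIndex_div_self (ha : 0 < a) (hlow : ∀ l, 1 ≤ l → a * l ≤ f l)
    (hup : ∀ l, 1 ≤ l → f l ≤ K * l ^ s) :
    lowerIndex (fun l => f l / l) = lowerIndex f - 1 :=
  (congrArg sSup (lowerIndexSet_div_self f)).trans <|
    Real.sSup_shift_sub_one ⟨s, lowerIndexSet_subset_Iic hup⟩ (Ico_subset_lowerIndexSet ha hlow)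

lemma upperIndex_div_self (ha : 0 < a) (hlow : ∀ l, 1 ≤ l → a * l ≤ f l)
    (hup : ∀ l, 1 ≤ l → f l ≤ K * l ^ s) :
    upperIndex (fun l => f l / l) = upperIndex f - 1 := by
  have hnn : ∀ l, 1 ≤ l → 0 ≤ f l := fun l hl => by nlinarith [hlow l hl]
  have hmem : max s 0 + 1 ∈ upperIndexSet f :=
    mem_upperIndexSet_of_le_mul_rpow hnn hup (by positivity) (by linarith [le_max_left s 0])
  exact (congrArg sInf (upperIndexSet_div_self f)).trans <|
    Real.sInf_shift_sub_one ⟨_, hmem⟩ (upperIndexSet_subset_Ici_one ha hlow)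

lemma deltaIndex_div_self (ha : 0 < a) (hlow : ∀ l, 1 ≤ l → a * l ≤ f l)
    (hone : 1 ∈ deltaIndexSet f) (hup : ∀ l, 1 ≤ l → f l ≤ K * l ^ s) :
    deltaIndex (fun l => f l / l) = deltaIndex f - 1 := by
  have hnn : ∀ l, 1 ≤ l → 0 ≤ f l := fun l hl => by nlinarith [hlow l hl]
  have hf : 0 < f 1 := by linarith [hlow 1 le_rfl]
  exact (congrArg sSup (deltaIndexSet_div_self f)).trans <|
    Real.sSup_shift_sub_one ⟨s, deltaIndexSet_subset_Iic hf hup⟩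
      fun c hc => mem_deltaIndexSet_of_le hnn hone hc.1 hc.2.le

end DivSelf

def Comparable (f g : ℝ → ℝ) : Prop :=
  ∃ a b : ℝ, 0 < a ∧ 0 < b ∧ ∀ l, 1 ≤ l → a * g l ≤ f l ∧ f l ≤ b * g l

namespace Comparable

variable {f g : ℝ → ℝ}

lemma symm (h : Comparable f g) : Comparable g f := by
  obtain ⟨a, b, ha, hb, hfg⟩ := h
  refine ⟨b⁻¹, a⁻¹, inv_pos.2 hb, inv_pos.2 ha, fun l hl => ⟨?_, ?_⟩⟩
  · rw [inv_mul_le_iff₀ hb]; exact (hfg l hl).2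
  · rw [le_inv_mul_iff₀ ha]; exact (hfg l hl).1

lemma lowerIndexSet_subset (h : Comparable f g) : lowerIndexSet g ⊆ lowerIndexSet f := by
  obtain ⟨a, _, ha, -, hfg⟩ := h
  rintro c ⟨hc, hg⟩
  refine ⟨hc, tendsto_atTop_mono' _ ?_ (hg.const_mul_atTop ha)⟩
  filter_upwards [eventually_ge_atTop 1] with l hl
  rw [← mul_assoc]
  exact mul_le_mul_of_nonneg_right (hfg l hl).1 (Real.rpow_nonneg (by linarith) _)

lemma upperIndexSet_subset (h : Comparable f g) : upperIndexSet g ⊆ upperIndexSet f := by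
  obtain ⟨a, b, -, -, hfg⟩ := h
  rintro c ⟨hc, hg⟩
  refine ⟨hc, tendsto_of_tendsto_of_tendsto_of_le_of_le' (by simpa using hg.const_mul a)
    (by simpa using hg.const_mul b) ?_ ?_⟩
  · filter_upwards [eventually_ge_atTop 1] with l hl
    rw [← mul_assoc]
    exact mul_le_mul_of_nonneg_right (hfg l hl).1 (Real.rpow_nonneg (by linarith) _)
  · filter_upwards [eventually_ge_atTop 1] with l hl
    rw [← mul_assoc]
    exact mul_le_mul_of_nonneg_right (hfg l hl).2 (Real.rpow_nonneg (by linarith) _)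

lemma deltaIndexSet_subset (h : Comparable f g) : deltaIndexSet g ⊆ deltaIndexSet f := by
  obtain ⟨a, b, ha, hb, hfg⟩ := h
  rintro c ⟨hc, C, hC, hg⟩
  refine ⟨hc, C * a / b, by positivity, fun μ l hμ hμl => ?_⟩
  have hμc : 0 ≤ μ ^ (-c) := Real.rpow_nonneg (by linarith) _
  have hlc : 0 ≤ l ^ (-c) := Real.rpow_nonneg (by linarith) _
  calc C * a / b * (f μ * μ ^ (-c)) ≤ C * a / b * (b * g μ * μ ^ (-c)) := by
        gcongr; exact (hfg μ hμ).2
    _ = a * (C * (g μ * μ ^ (-c))) := by field_simp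
    _ ≤ a * (g l * l ^ (-c)) := mul_le_mul_of_nonneg_left (hg μ l hμ hμl) ha.le
    _ ≤ f l * l ^ (-c) := by rw [← mul_assoc]; gcongr; exact (hfg l (by linarith)).1

lemma lowerIndex_eq (h : Comparable f g) : lowerIndex f = lowerIndex g :=
  congrArg sSup (h.symm.lowerIndexSet_subset.antisymm h.lowerIndexSet_subset)

lemma upperIndex_eq (h : Comparable f g) : upperIndex f = upperIndex g :=
  congrArg sInf (h.symm.upperIndexSet_subset.antisymm h.upperIndexSet_subset)

lemma deltaIndex_eq (h : Comparable f g) : deltaIndex f = deltaIndex g :=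
  congrArg sSup (h.symm.deltaIndexSet_subset.antisymm h.deltaIndexSet_subset)

end Comparable

namespace IsBranchingMechanism

variable {α β : ℝ} {π : Measure ℝ} {l μ : ℝ}

lemma ae_pos (h : IsBranchingMechanism α β π) : ∀ᵐ r ∂π, 0 < r := by
  rw [ae_iff]
  simp only [not_lt]
  exact h.carried_on_pos

lemma integrable_exp_neg_mul_sub_one_add (h : IsBranchingMechanism α β π) (hl : 0 ≤ l) :
    Integrable (fun r => Real.exp (-(l * r)) - 1 + l * r) π := by
  refine (h.integ_min.const_mul (l + l ^ 2)).mono' (by fun_prop) ?_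
  filter_upwards [h.ae_pos] with r hr
  rw [Real.norm_of_nonneg (exp_neg_sub_one_add_nonneg _)]
  exact exp_neg_mul_sub_one_add_le hl hr.le

lemma integrable_mul_one_sub_exp_neg_mul (h : IsBranchingMechanism α β π) (hl : 0 ≤ l) :
    Integrable (fun r => r * (1 - Real.exp (-(l * r)))) π := by
  refine (h.integ_min.const_mul (1 + l)).mono' (by fun_prop) ?_
  filter_upwards [h.ae_pos] with r hr
  rw [Real.norm_of_nonneg (mul_nonneg hr.le (one_sub_exp_neg_nonneg (mul_nonneg hl hr.le)))]
  exact mul_one_sub_exp_neg_mul_le hl hr.le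

lemma psiFun_le_mul_psiDeriv (h : IsBranchingMechanism α β π) (hl : 0 ≤ l) :
    psiFun α β π l ≤ l * psiDeriv α β π l := by
  have hI : ∫ r, (Real.exp (-(l * r)) - 1 + l * r) ∂π ≤
      l * ∫ r, r * (1 - Real.exp (-(l * r))) ∂π := by
    rw [← integral_const_mul]
    refine integral_mono (h.integrable_exp_neg_mul_sub_one_add hl)
      ((h.integrable_mul_one_sub_exp_neg_mul hl).const_mul l) fun r => ?_
    simpa only [mul_assoc] using exp_neg_sub_one_add_le_mul_one_sub_exp_neg (l * r)
  simp only [psiFun, psiDeriv]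
  nlinarith [mul_nonneg h.beta_nonneg (sq_nonneg l)]

lemma mul_psiDeriv_le_two_mul_psiFun (h : IsBranchingMechanism α β π) (hl : 0 ≤ l) :
    l * psiDeriv α β π l ≤ 2 * psiFun α β π l := by
  have hI : l * ∫ r, r * (1 - Real.exp (-(l * r))) ∂π ≤
      2 * ∫ r, (Real.exp (-(l * r)) - 1 + l * r) ∂π := by
    rw [← integral_const_mul, ← integral_const_mul]
    refine integral_mono_ae ((h.integrable_mul_one_sub_exp_neg_mul hl).const_mul l)
      ((h.integrable_exp_neg_mul_sub_one_add hl).const_mul 2) ?_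
    filter_upwards [h.ae_pos] with r hr
    simpa only [mul_assoc] using mul_one_sub_exp_neg_le_two_mul (mul_nonneg hl hr.le)
  simp only [psiFun, psiDeriv]
  nlinarith [mul_nonneg h.alpha_nonneg hl]

lemma mul_psiFun_le_two_mul_mul_psiFun (h : IsBranchingMechanism α β π) (hμ : 0 < μ)
    (hμl : μ ≤ l) : l * psiFun α β π μ ≤ 2 * (μ * psiFun α β π l) := by
  have hl : 0 < l := hμ.trans_le hμl
  have hI : l * ∫ r, (Real.exp (-(μ * r)) - 1 + μ * r) ∂π ≤
      2 * μ * ∫ r, (Real.exp (-(l * r)) - 1 + l * r) ∂π := by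
    rw [← integral_const_mul, ← integral_const_mul]
    refine integral_mono_ae ((h.integrable_exp_neg_mul_sub_one_add hμ.le).const_mul l)
      ((h.integrable_exp_neg_mul_sub_one_add hl.le).const_mul _) ?_
    filter_upwards [h.ae_pos] with r hr
    have := mul_exp_neg_sub_one_add_le (mul_nonneg hμ.le hr.le)
      (mul_le_mul_of_nonneg_right hμl hr.le)
    refine le_of_mul_le_mul_left ?_ hr
    linear_combination this
  have hα := mul_nonneg (mul_nonneg h.alpha_nonneg hμ.le) hl.le
  have hβ := mul_nonneg (mul_nonneg h.beta_nonneg hμ.le) hl.le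
  simp only [psiFun]
  nlinarith [mul_nonneg hβ (sub_nonneg.2 hμl), mul_nonneg hβ hl.le]

lemma psiFun_le_mul_sq (h : IsBranchingMechanism α β π) (hl : 1 ≤ l) :
    psiFun α β π l ≤ (α + β + 2 * ∫ r, min r (r ^ 2) ∂π) * l ^ 2 := by
  have hM : 0 ≤ ∫ r, min r (r ^ 2) ∂π :=
    integral_nonneg_of_ae (h.ae_pos.mono fun r hr => by positivity)
  have hI : ∫ r, (Real.exp (-(l * r)) - 1 + l * r) ∂π ≤
      (l + l ^ 2) * ∫ r, min r (r ^ 2) ∂π := by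
    rw [← integral_const_mul]
    refine integral_mono_ae (h.integrable_exp_neg_mul_sub_one_add (by linarith))
      (h.integ_min.const_mul _) ?_
    filter_upwards [h.ae_pos] with r hr
    exact exp_neg_mul_sub_one_add_le (by linarith) hr.le
  simp only [psiFun]
  nlinarith [mul_nonneg h.alpha_nonneg (by nlinarith : (0 : ℝ) ≤ l ^ 2 - l),
    mul_nonneg hM (by nlinarith : (0 : ℝ) ≤ l ^ 2 - l)]

lemma one_mem_deltaIndexSet (h : IsBranchingMechanism α β π) :
    1 ∈ deltaIndexSet (psiFun α β π) := by
  refine ⟨zero_le_one, 1 / 2, one_half_pos, fun μ l hμ hμl => ?_⟩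
  have hμ₀ : 0 < μ := by linarith
  have hl₀ : 0 < l := by linarith
  rw [Real.rpow_neg_one, Real.rpow_neg_one, ← div_eq_mul_inv, ← div_eq_mul_inv, ← mul_div_assoc,
    div_le_div_iff₀ hμ₀ hl₀]
  linarith [h.mul_psiFun_le_two_mul_mul_psiFun hμ₀ hμl]

lemma comparable_psiDeriv (h : IsBranchingMechanism α β π) :
    Comparable (psiDeriv α β π) (fun l => psiFun α β π l / l) := by
  refine ⟨1, 2, one_pos, two_pos, fun l hl => ⟨?_, ?_⟩⟩
  · rw [one_mul, div_le_iff₀' (by linarith)]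
    exact h.psiFun_le_mul_psiDeriv (by linarith)
  · rw [← mul_div_assoc, le_div_iff₀' (by linarith)]
    exact h.mul_psiDeriv_le_two_mul_psiFun (by linarith)

end IsBranchingMechanism

theorem statement4_general (α β : ℝ) (π : Measure ℝ) (h : IsBranchingMechanism α β π)
    (hpos : 0 < psiFun α β π 1)
    (ψtilde : ℝ → ℝ)
    (hψtilde : ∀ l : ℝ, 0 < l → ψtilde l = psiFun α β π l / l) :
    deltaIndex ψtilde = deltaIndex (psiFun α β π) - 1 ∧
    deltaIndex (psiDeriv α β π) = deltaIndex (psiFun α β π) - 1 ∧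
    lowerIndex ψtilde = lowerIndex (psiFun α β π) - 1 ∧
    lowerIndex (psiDeriv α β π) = lowerIndex (psiFun α β π) - 1 ∧
    upperIndex ψtilde = upperIndex (psiFun α β π) - 1 ∧
    upperIndex (psiDeriv α β π) = upperIndex (psiFun α β π) - 1 := by
  have ha : 0 < psiFun α β π 1 / 2 := half_pos hpos
  have hlow : ∀ l, 1 ≤ l → psiFun α β π 1 / 2 * l ≤ psiFun α β π l := fun l hl => by
    linarith [h.mul_psiFun_le_two_mul_mul_psiFun one_pos hl]
  have hup : ∀ l, 1 ≤ l →
      psiFun α β π l ≤ (α + β + 2 * ∫ r, min r (r ^ 2) ∂π) * l ^ (2 : ℝ) := fun l hl => by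
    simpa only [Real.rpow_two] using h.psiFun_le_mul_sq hl
  have htilde : Comparable ψtilde (fun l => psiFun α β π l / l) :=
    ⟨1, 1, one_pos, one_pos, fun l hl => by simp [hψtilde l (by linarith)]⟩
  have hderiv := h.comparable_psiDeriv
  rw [htilde.deltaIndex_eq, hderiv.deltaIndex_eq, htilde.lowerIndex_eq, hderiv.lowerIndex_eq,
    htilde.upperIndex_eq, hderiv.upperIndex_eq,
    deltaIndex_div_self ha hlow h.one_mem_deltaIndexSet hup, lowerIndex_div_self ha hlow hup,
    upperIndex_div_self ha hlow hup]
  exact ⟨rfl, rfl, rfl, rfl, rfl, rfl⟩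

/-- with ψ̃ the continuous function on [0,∞) such that ψ̃(0) = α
and ψ̃(λ) = ψ(λ)/λ for λ > 0, one has δ_{ψ̃} = δ_{ψ′} = δ − 1,
γ_{ψ̃} = γ_{ψ′} = γ − 1 and η_{ψ̃} = η_{ψ′} = η − 1. -/
theorem statement4 (α β : ℝ) (π : Measure ℝ) (h : IsBranchingMechanism α β π)
    (hpos : 0 < psiFun α β π 1)
    (ψtilde : ℝ → ℝ) (hψtilde0 : ψtilde 0 = α)
    (hψtilde : ∀ l : ℝ, 0 < l → ψtilde l = psiFun α β π l / l) :
    deltaIndex ψtilde = deltaIndex (psiFun α β π) - 1 ∧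
    deltaIndex (psiDeriv α β π) = deltaIndex (psiFun α β π) - 1 ∧
    lowerIndex ψtilde = lowerIndex (psiFun α β π) - 1 ∧
    lowerIndex (psiDeriv α β π) = lowerIndex (psiFun α β π) - 1 ∧
    upperIndex ψtilde = upperIndex (psiFun α β π) - 1 ∧
    upperIndex (psiDeriv α β π) = upperIndex (psiFun α β π) - 1 :=
  statement4_general α β π h hpos ψtilde hψtilde
end
end

section
/- Let ψ be a branching mechanism of Lévy–Khintchine form with δ > 1, let d be an integer with d > 2δ/(δ−1), and fix K ∈ (0,∞). Then there exists a constant C ∈ (0,∞), depending only on d, ψ and K, such that J(r) ≤ C for all r ∈ (0, (K/ψ′(1))^{1/2}). -/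
/-! Pick an order `c > p := d/(d−2)` at which `ψ` satisfies the weak lower scaling condition
(possible because `d > 2δ/(δ−1)` says exactly `p < δ`). Then `ψ(2v) ≤ C⁻¹ψ(2q)(v/q)^c` for
`1 ≤ v ≤ q`, and together with `vψ′(v) ≤ ψ(2v)` this gives
`∫_1^q ψ′(v)v^{−p} dv ≤ ψ(2q)q^{−p}/(C(c−p))`. Concavity of `ψ′` yields
`ψ(2q) ≤ 2qψ′(2q) ≤ 4qψ′(q) = 4qK/r²`, and since `2/(d−2) = p−1` all powers of `q` and `r`
cancel in `J(r)`, leaving `J(r) ≤ 4K/(C(c−p))`. -/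

open MeasureTheory Filter Set

noncomputable section

/-- `J(r) = r² q_r^{2/(d−2)} ∫_1^{q_r} ψ′(v) v^{−d/(d−2)} dv`
where `q_r = ψ′^{−1}(K·r^{−2})`. -/
def Jfun (α β : ℝ) (π : Measure ℝ) (ψ'inv : ℝ → ℝ) (K : ℝ) (d : ℕ) (r : ℝ) : ℝ :=
  r ^ 2 * ψ'inv (K / r ^ 2) ^ ((2 : ℝ) / ((d : ℝ) - 2)) *
    ∫ v in (1 : ℝ)..ψ'inv (K / r ^ 2), psiDeriv α β π v * v ^ (-(d : ℝ) / ((d : ℝ) - 2))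

/-- Weak lower scaling of order `c`: `deltaIndex f` is the supremum of the orders `c ≥ 0` for
which it holds with some `C > 0`. -/
def LowerScalingWith (C c : ℝ) (f : ℝ → ℝ) : Prop :=
  ∀ μ l : ℝ, 1 ≤ μ → μ ≤ l → C * (f μ * μ ^ (-c)) ≤ f l * l ^ (-c)

namespace LowerScalingWith

variable {C c : ℝ} {f : ℝ → ℝ}

theorem le_mul_div_rpow (hf : LowerScalingWith C c f) (hC : 0 < C) {μ l : ℝ} (hμ : 1 ≤ μ)
    (hμl : μ ≤ l) : f μ ≤ C⁻¹ * f l * (μ / l) ^ c := by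
  have hμ0 : 0 < μ := one_pos.trans_le hμ
  have hl0 : 0 < l := hμ0.trans_le hμl
  have key := hf μ l hμ hμl
  rw [Real.rpow_neg hμ0.le, Real.rpow_neg hl0.le, ← div_eq_mul_inv, ← div_eq_mul_inv,
    ← le_div_iff₀' hC, div_le_iff₀ (by positivity)] at key
  rw [Real.div_rpow hμ0.le hl0.le]
  calc f μ ≤ f l / l ^ c / C * μ ^ c := key
    _ = C⁻¹ * f l * (μ ^ c / l ^ c) := by ring

theorem comp_mul_left (hf : LowerScalingWith C c f) {a : ℝ} (ha : 1 ≤ a) :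
    LowerScalingWith C c (fun v => f (a * v)) := by
  intro μ l hμ hμl
  have ha0 : 0 < a := one_pos.trans_le ha
  have hμ0 : 0 < μ := one_pos.trans_le hμ
  have key := hf (a * μ) (a * l) (one_le_mul_of_one_le_of_one_le ha hμ)
    (mul_le_mul_of_nonneg_left hμl ha0.le)
  rw [Real.mul_rpow ha0.le hμ0.le, Real.mul_rpow ha0.le (hμ0.trans_le hμl).le] at key
  have ha_pow : 0 < a ^ (-c) := Real.rpow_pos_of_pos ha0 _
  nlinarith

end LowerScalingWith

theorem exists_lowerScalingWith_of_lt_deltaIndex {f : ℝ → ℝ} {p : ℝ} (hp : 0 ≤ p)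
    (h : p < deltaIndex f) : ∃ c, p < c ∧ ∃ C, 0 < C ∧ LowerScalingWith C c f := by
  have hne : {c : ℝ | 0 ≤ c ∧ ∃ C : ℝ, 0 < C ∧ LowerScalingWith C c f}.Nonempty := by
    by_contra hempty
    rw [not_nonempty_iff_eq_empty] at hempty
    rw [deltaIndex] at h
    unfold LowerScalingWith at hempty
    rw [hempty, Real.sSup_empty] at h
    linarith
  obtain ⟨c, ⟨-, hc⟩, hpc⟩ := exists_lt_of_lt_csSup hne h
  exact ⟨c, hpc, hc⟩

theorem integral_mul_rpow_neg_le_of_lowerScalingWith {C c p q : ℝ} {F g : ℝ → ℝ}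
    (hF : LowerScalingWith C c F) (hC : 0 < C) (hFq : 0 ≤ F q)
    (hg : ∀ v ∈ Icc 1 q, g v ≤ F v / v) (hpc : p < c) (hq : 1 ≤ q) :
    ∫ v in (1 : ℝ)..q, g v * v ^ (-p) ≤ F q * q ^ (-p) / (C * (c - p)) := by
  have hq0 : 0 < q := one_pos.trans_le hq
  have hcp : 0 < c - p := sub_pos.mpr hpc
  have hbound_nonneg : 0 ≤ F q * q ^ (-p) / (C * (c - p)) := by positivity
  by_cases hint : IntervalIntegrable (fun v => g v * v ^ (-p)) volume 1 q
  swap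
  · rwa [intervalIntegral.integral_undef hint]
  set A := C⁻¹ * F q * q ^ (-c)
  have hpointwise : ∀ v ∈ Icc 1 q, g v * v ^ (-p) ≤ A * v ^ (c - 1 - p) := by
    rintro v ⟨hv1, hvq⟩
    have hv0 : 0 < v := one_pos.trans_le hv1
    calc g v * v ^ (-p) ≤ C⁻¹ * F q * (v / q) ^ c / v * v ^ (-p) := by
          gcongr
          exact (hg v ⟨hv1, hvq⟩).trans (by gcongr; exact hF.le_mul_div_rpow hC hv1 hvq)
      _ = A * (v ^ c * v ^ (-1 : ℝ) * v ^ (-p)) := by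
          simp only [A]
          rw [Real.div_rpow hv0.le hq0.le, Real.rpow_neg hq0.le c, Real.rpow_neg_one]
          ring
      _ = A * v ^ (c - 1 - p) := by
          rw [← Real.rpow_add hv0, ← Real.rpow_add hv0]
          ring_nf
  have hcont : IntervalIntegrable (fun v => A * v ^ (c - 1 - p)) volume 1 q := by
    refine (continuousOn_const.mul (continuousOn_id.rpow_const ?_)).intervalIntegrable
    intro v hv
    rw [uIcc_of_le hq] at hv
    exact Or.inl (one_pos.trans_le hv.1).ne'
  calc ∫ v in (1 : ℝ)..q, g v * v ^ (-p)
      ≤ ∫ v in (1 : ℝ)..q, A * v ^ (c - 1 - p) :=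
        intervalIntegral.integral_mono_on hq hint hcont hpointwise
    _ = A * ((q ^ (c - p) - 1) / (c - p)) := by
        rw [intervalIntegral.integral_const_mul, integral_rpow (Or.inl (by linarith)),
          Real.one_rpow, show c - 1 - p + 1 = c - p by ring]
    _ ≤ A * (q ^ (c - p) / (c - p)) := by gcongr; linarith
    _ = F q * q ^ (-p) / (C * (c - p)) := by
        rw [show q ^ (-p) = q ^ (-c) * q ^ (c - p) by rw [← Real.rpow_add hq0]; ring_nf]
        simp only [A]
        field_simp

namespace Real

theorem exp_neg_sub_one_add_nonneg (x : ℝ) : 0 ≤ exp (-x) - 1 + x := by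
  linarith [Real.add_one_le_exp (-x)]

theorem exp_neg_sub_one_add_le_mul_one_sub_exp_neg (x : ℝ) :
    exp (-x) - 1 + x ≤ x * (1 - exp (-x)) := by
  have h : (1 + x) * exp (-x) ≤ exp x * exp (-x) :=
    mul_le_mul_of_nonneg_right (by linarith [Real.add_one_le_exp x]) (exp_pos _).le
  rw [← exp_add, add_neg_cancel, exp_zero] at h
  linarith

theorem mul_one_sub_exp_neg_le_exp_neg_two_mul (x : ℝ) :
    x * (1 - exp (-x)) ≤ exp (-(2 * x)) - 1 + 2 * x := by
  have hsq : exp (-(2 * x)) = exp (-x) ^ 2 := by rw [← exp_nat_mul]; ring_nf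
  nlinarith [Real.add_one_le_exp (-x), exp_pos (-x)]

theorem one_sub_exp_neg_two_mul_le (x : ℝ) : 1 - exp (-(2 * x)) ≤ 2 * (1 - exp (-x)) := by
  have hsq : exp (-(2 * x)) = exp (-x) ^ 2 := by rw [← exp_nat_mul]; ring_nf
  nlinarith [sq_nonneg (1 - exp (-x))]

end Real

section BranchingMechanism

variable {α β : ℝ} {π : Measure ℝ}

theorem IsBranchingMechanism.ae_pos_s11 (h : IsBranchingMechanism α β π) : ∀ᵐ r ∂π, 0 < r := by
  rw [ae_iff]
  simpa only [not_lt, Iic_def] using h.carried_on_pos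

theorem IsBranchingMechanism.integrable_psiDeriv_integrand (h : IsBranchingMechanism α β π)
    {l : ℝ} (hl : 0 ≤ l) : Integrable (fun r => r * (1 - Real.exp (-(l * r)))) π := by
  refine (h.integ_min.const_mul (max 1 l)).mono (by fun_prop) ?_
  filter_upwards [h.ae_pos_s11] with r hr
  have h0 : 0 ≤ 1 - Real.exp (-(l * r)) := by
    linarith [Real.exp_le_one_iff.mpr (neg_nonpos.mpr (mul_nonneg hl hr.le))]
  have h1 : 1 - Real.exp (-(l * r)) ≤ 1 := by linarith [Real.exp_pos (-(l * r))]
  have h2 : 1 - Real.exp (-(l * r)) ≤ l * r := by linarith [Real.add_one_le_exp (-(l * r))]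
  rw [Real.norm_of_nonneg (by positivity), Real.norm_of_nonneg (by positivity)]
  rcases le_total r 1 with hr1 | hr1
  · rw [min_eq_right (by nlinarith)]
    nlinarith [le_max_right 1 l]
  · rw [min_eq_left (by nlinarith)]
    nlinarith [le_max_left 1 l]

theorem IsBranchingMechanism.integrable_psiFun_integrand (h : IsBranchingMechanism α β π)
    {l : ℝ} (hl : 0 ≤ l) : Integrable (fun r => Real.exp (-(l * r)) - 1 + l * r) π := by
  refine ((h.integrable_psiDeriv_integrand hl).const_mul l).mono' (by fun_prop)
    (ae_of_all _ fun r => ?_)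
  rw [Real.norm_of_nonneg (Real.exp_neg_sub_one_add_nonneg _), ← mul_assoc]
  exact Real.exp_neg_sub_one_add_le_mul_one_sub_exp_neg _

theorem IsBranchingMechanism.monotoneOn_psiDeriv (h : IsBranchingMechanism α β π) :
    MonotoneOn (psiDeriv α β π) (Ici 0) := by
  intro a (ha : 0 ≤ a) b (hb : 0 ≤ b) hab
  have hint : ∫ r, r * (1 - Real.exp (-(a * r))) ∂π ≤ ∫ r, r * (1 - Real.exp (-(b * r))) ∂π := by
    refine integral_mono_ae (h.integrable_psiDeriv_integrand ha)
      (h.integrable_psiDeriv_integrand hb) ?_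
    filter_upwards [h.ae_pos_s11] with r hr
    have : Real.exp (-(b * r)) ≤ Real.exp (-(a * r)) := Real.exp_le_exp.mpr (by nlinarith)
    nlinarith
  simp only [psiDeriv]
  nlinarith [h.beta_nonneg]

theorem IsBranchingMechanism.le_psiDeriv (h : IsBranchingMechanism α β π) {l : ℝ}
    (hl : 0 ≤ l) : α ≤ psiDeriv α β π l := by
  simpa [psiDeriv] using h.monotoneOn_psiDeriv self_mem_Ici hl hl

theorem IsBranchingMechanism.one_le_of_psiDeriv_lt (h : IsBranchingMechanism α β π) {q : ℝ}
    (hq : 0 ≤ q) (hlt : psiDeriv α β π 1 < psiDeriv α β π q) : 1 ≤ q := by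
  by_contra! hq1
  exact (h.monotoneOn_psiDeriv hq (mem_Ici.mpr zero_le_one) hq1.le).not_gt hlt

theorem IsBranchingMechanism.psiFun_nonneg (h : IsBranchingMechanism α β π) {l : ℝ}
    (hl : 0 ≤ l) : 0 ≤ psiFun α β π l := by
  have : 0 ≤ ∫ r, (Real.exp (-(l * r)) - 1 + l * r) ∂π :=
    integral_nonneg fun r => Real.exp_neg_sub_one_add_nonneg _
  simp only [psiFun]
  nlinarith [h.alpha_nonneg, h.beta_nonneg, sq_nonneg l]

theorem IsBranchingMechanism.mul_psiDeriv_le_psiFun_two_mul (h : IsBranchingMechanism α β π)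
    {l : ℝ} (hl : 0 ≤ l) : l * psiDeriv α β π l ≤ psiFun α β π (2 * l) := by
  have hint : ∫ r, l * (r * (1 - Real.exp (-(l * r)))) ∂π
      ≤ ∫ r, (Real.exp (-(2 * l * r)) - 1 + 2 * l * r) ∂π := by
    refine integral_mono_ae ((h.integrable_psiDeriv_integrand hl).const_mul l)
      (h.integrable_psiFun_integrand (by positivity)) (Eventually.of_forall fun r => ?_)
    simpa only [← mul_assoc] using Real.mul_one_sub_exp_neg_le_exp_neg_two_mul (l * r)
  rw [integral_const_mul] at hint
  simp only [psiFun, psiDeriv]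
  nlinarith [h.alpha_nonneg, h.beta_nonneg, sq_nonneg l]

theorem IsBranchingMechanism.psiFun_le_mul_psiDeriv_s11 (h : IsBranchingMechanism α β π) {l : ℝ}
    (hl : 0 ≤ l) : psiFun α β π l ≤ l * psiDeriv α β π l := by
  have hint : ∫ r, (Real.exp (-(l * r)) - 1 + l * r) ∂π
      ≤ ∫ r, l * (r * (1 - Real.exp (-(l * r)))) ∂π := by
    refine integral_mono_ae (h.integrable_psiFun_integrand hl)
      ((h.integrable_psiDeriv_integrand hl).const_mul l) (ae_of_all _ fun r => ?_)
    simpa only [← mul_assoc] using Real.exp_neg_sub_one_add_le_mul_one_sub_exp_neg _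
  rw [integral_const_mul] at hint
  simp only [psiFun, psiDeriv]
  nlinarith [h.beta_nonneg, sq_nonneg l]

theorem IsBranchingMechanism.psiDeriv_two_mul_le (h : IsBranchingMechanism α β π) {l : ℝ}
    (hl : 0 ≤ l) : psiDeriv α β π (2 * l) ≤ 2 * psiDeriv α β π l := by
  have hint : ∫ r, r * (1 - Real.exp (-(2 * l * r))) ∂π
      ≤ ∫ r, 2 * (r * (1 - Real.exp (-(l * r)))) ∂π := by
    refine integral_mono_ae (h.integrable_psiDeriv_integrand (by positivity))
      ((h.integrable_psiDeriv_integrand hl).const_mul 2) ?_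
    filter_upwards [h.ae_pos_s11] with r hr
    have := Real.one_sub_exp_neg_two_mul_le (l * r)
    rw [mul_assoc]
    nlinarith
  rw [integral_const_mul] at hint
  simp only [psiDeriv]
  nlinarith [h.alpha_nonneg]

theorem IsBranchingMechanism.psiFun_two_mul_le (h : IsBranchingMechanism α β π) {l : ℝ}
    (hl : 0 ≤ l) : psiFun α β π (2 * l) ≤ 4 * l * psiDeriv α β π l :=
  calc psiFun α β π (2 * l) ≤ 2 * l * psiDeriv α β π (2 * l) :=
        h.psiFun_le_mul_psiDeriv_s11 (by positivity)
    _ ≤ 2 * l * (2 * psiDeriv α β π l) := by gcongr; exact h.psiDeriv_two_mul_le hl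
    _ = 4 * l * psiDeriv α β π l := by ring

end BranchingMechanism

theorem lt_div_sq_of_lt_sqrt_div {a K r : ℝ} (hK : 0 < K) (hr : 0 < r)
    (hrK : r < Real.sqrt (K / a)) : a < K / r ^ 2 := by
  rcases le_or_gt a 0 with ha | ha
  · exact ha.trans_lt (by positivity)
  · rw [Real.lt_sqrt hr.le, lt_div_iff₀ ha] at hrK
    rwa [lt_div_iff₀ (by positivity), mul_comm]

theorem two_lt_and_div_sub_two_lt {δ d : ℝ} (hδ : 1 < δ) (hd : 2 * δ / (δ - 1) < d) :
    2 < d ∧ d / (d - 2) < δ := by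
  rw [div_lt_iff₀ (by linarith)] at hd
  have hd2 : 2 < d := by nlinarith
  exact ⟨hd2, by rw [div_lt_iff₀ (by linarith)]; linarith⟩

theorem statement11_general (α β : ℝ) (π : Measure ℝ) (h : IsBranchingMechanism α β π)
    (hδ : 1 < deltaIndex (psiFun α β π))
    (d : ℕ)
    (hd : 2 * deltaIndex (psiFun α β π) / (deltaIndex (psiFun α β π) - 1) < (d : ℝ))
    (K : ℝ) (hK : 0 < K)
    (ψ'inv : ℝ → ℝ)
    (hψ'inv : ∀ x : ℝ, α ≤ x → 0 ≤ ψ'inv x ∧ psiDeriv α β π (ψ'inv x) = x) :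
    ∃ C : ℝ, 0 < C ∧
      ∀ r : ℝ, 0 < r → r < Real.sqrt (K / psiDeriv α β π 1) →
        Jfun α β π ψ'inv K d r ≤ C := by
  set p : ℝ := d / (d - 2)
  obtain ⟨hd2, hpδ⟩ := two_lt_and_div_sub_two_lt hδ hd
  have hp1 : 1 < p := by rw [lt_div_iff₀ (by linarith)]; linarith
  obtain ⟨c, hpc, C₀, hC₀, hscale⟩ := exists_lowerScalingWith_of_lt_deltaIndex (by linarith) hpδ
  refine ⟨4 * K / (C₀ * (c - p)), by have := sub_pos.mpr hpc; positivity, fun r hr hrK => ?_⟩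
  set s := K / r ^ 2
  have h1s : psiDeriv α β π 1 < s := lt_div_sq_of_lt_sqrt_div hK hr hrK
  obtain ⟨hq0, hqs⟩ := hψ'inv s ((h.le_psiDeriv zero_le_one).trans h1s.le)
  set q := ψ'inv s
  have hq1 : 1 ≤ q := h.one_le_of_psiDeriv_lt hq0 (hqs ▸ h1s)
  have hq : 0 < q := one_pos.trans_le hq1
  have hI : ∫ v in (1 : ℝ)..q, psiDeriv α β π v * v ^ (-p)
      ≤ psiFun α β π (2 * q) * q ^ (-p) / (C₀ * (c - p)) :=
    integral_mul_rpow_neg_le_of_lowerScalingWith (hscale.comp_mul_left one_le_two) hC₀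
      (h.psiFun_nonneg (by positivity))
      (fun v hv => (le_div_iff₀' (one_pos.trans_le hv.1)).mpr
        (h.mul_psiDeriv_le_psiFun_two_mul (zero_le_one.trans hv.1))) hpc hq1
  have hψ : psiFun α β π (2 * q) ≤ 4 * q * s := hqs ▸ h.psiFun_two_mul_le hq0
  have hexp : (2 : ℝ) / ((d : ℝ) - 2) = p - 1 := by
    have : (d : ℝ) - 2 ≠ 0 := by linarith
    simp only [p]
    field_simp
    ring
  rw [Jfun, hexp, neg_div]
  calc r ^ 2 * q ^ (p - 1) * ∫ v in (1 : ℝ)..q, psiDeriv α β π v * v ^ (-p)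
      ≤ r ^ 2 * q ^ (p - 1) * (4 * q * s * q ^ (-p) / (C₀ * (c - p))) := by
        have := sub_pos.mpr hpc
        gcongr
        exact hI.trans (by gcongr)
    _ = 4 * K / (C₀ * (c - p)) := by
        rw [Real.rpow_sub_one hq.ne', Real.rpow_neg hq.le]
        simp only [s]
        field_simp

/-- if δ > 1 and d > 2δ/(δ−1), then J is bounded on
(0, (K/ψ′(1))^{1/2}) by a constant depending only on d, ψ and K. -/
theorem statement11 (α β : ℝ) (π : Measure ℝ) (h : IsBranchingMechanism α β π)
    (hδ : 1 < deltaIndex (psiFun α β π))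
    (d : ℕ)
    (hd : 2 * deltaIndex (psiFun α β π) / (deltaIndex (psiFun α β π) - 1) < (d : ℝ))
    (K : ℝ) (hK : 0 < K)
    (ψ'inv : ℝ → ℝ)
    (hψ'inv : ∀ x : ℝ, α ≤ x → 0 ≤ ψ'inv x ∧ psiDeriv α β π (ψ'inv x) = x)
    (hψ'inv' : ∀ y : ℝ, 0 ≤ y → ψ'inv (psiDeriv α β π y) = y) :
    ∃ C : ℝ, 0 < C ∧
      ∀ r : ℝ, 0 < r → r < Real.sqrt (K / psiDeriv α β π 1) →
        Jfun α β π ψ'inv K d r ≤ C :=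
  statement11_general α β π h hδ d hd K hK ψ'inv hψ'inv
end
end
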